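/- Let Γ and L be groups with finite generating sets S_Γ and S_L respectively, and endow Γ ≀ L with the 'switch or walk' generating set S_Γ ∪ S_L. For every g = (γ,f) ∈ Γ ≀ L, the word norm is |g| = Σ_{x∈Γ} |f(x)|_{S_L} + d_TS(e_Γ, supp(f), γ), where d_TS is taken in Cay(Γ,S_Γ). -/

import Mathlib

/-! ### Cayley graphs, word metric, spheres, annuli -/

/-- The Cayley graph of a group with respect to a set `S` of generators
(symmetrized, without loops). -/
def cayley (G : Type*) [Group G] (S : Set G) : SimpleGraph G where
  Adj g h := g ≠ h ∧ (g⁻¹ * h ∈ S ∨ h⁻¹ * g ∈ S)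
  symm := by
    constructor
    rintro g h ⟨hne, hs⟩
    exact ⟨hne.symm, hs.symm⟩
  loopless := by
    constructor
    rintro g ⟨hne, -⟩
    exact hne rfl

variable {G : Type*} [Group G]

/-- The word length of `g`, i.e. the distance from the identity to `g` in the Cayley graph. -/
noncomputable def wlen (S : Set G) (g : G) : ℕ :=
  (cayley G S).dist 1 g

/-- The ball of radius `n`. -/
def wBall (S : Set G) (n : ℕ) : Set G := {g | wlen S g ≤ n}

/-- The sphere of radius `n`. -/
def wSphere (S : Set G) (n : ℕ) : Set G := {g | wlen S g = n}

/-- The annulus of radius `n` and thickness `r`, i.e. `B(n+r) \ B(n-1)`. -/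
def wAnnulus (S : Set G) (n r : ℕ) : Set G := {g | n ≤ wlen S g ∧ wlen S g ≤ n + r}

/-- The part of `A` lying in infinite connected components of the subgraph of the
Cayley graph induced on `A`.  When the infinite component is unique (one-ended case)
this is exactly the infinite component of `A`. -/
def infPart (S : Set G) (A : Set G) : Set G :=
  {g | ∃ hg : g ∈ A, {w : ↥A | ((cayley G S).induce A).Reachable ⟨g, hg⟩ w}.Infinite}

/-- `S(n,r)^∞ = B(n+r) ∩ B(n-1)^{c,∞}`: the elements of the annulus connected to infinity. -/
def sphereInf (S : Set G) (n r : ℕ) : Set G :=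
  wAnnulus S n r ∩ infPart S {g | n ≤ wlen S g}

/-- The graph `S(n,r)^∞` is connected. -/
def SpheresConn (S : Set G) (n r : ℕ) : Prop :=
  ((cayley G S).induce (sphereInf S n r)).Connected

/-- The connection thickness `th_{G,S}(n)`: the least `r` such that `S(n,r)^∞` is connected. -/
noncomputable def connThickness (S : Set G) (n : ℕ) : ℕ :=
  sInf {r | SpheresConn S n r}

/-- The retreat depth of `g`: the least `d ≥ 0` such that `g` belongs to an infinite
component of the complement of `B(|g|-d-1)`. -/
noncomputable def retreatDepth (S : Set G) (g : G) : ℕ :=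
  sInf {d | g ∈ infPart S {x | wlen S g ≤ wlen S x + d}}

/-- `rd(G,S) = sup_g rd(g)`, as an extended natural number. -/
noncomputable def rdSup (S : Set G) : ℕ∞ :=
  ⨆ g : G, (retreatDepth S g : ℕ∞)

/-- `g` is a dead-end: no neighbour of `g` is further away from the identity. -/
def IsDeadEnd (S : Set G) (g : G) : Prop :=
  ∀ h : G, (cayley G S).Adj g h → wlen S h ≤ wlen S g

/-- `x` and `y` are connected by a path staying inside `A`. -/
def connectedIn (S : Set G) (A : Set G) (x y : G) : Prop :=
  ∃ w : (cayley G S).Walk x y, ∀ v ∈ w.support, v ∈ A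

/-- The travelling salesman distance from `x` to `y` through `A`: the length of the
shortest walk from `x` to `y` visiting every vertex of `A`. -/
noncomputable def tsDist {V : Type*} (H : SimpleGraph V) (x : V) (A : Set V) (y : V) : ℕ :=
  sInf {n | ∃ w : H.Walk x y, w.length = n ∧ ∀ a ∈ A, a ∈ w.support}

/-! ### Entropy of partitions -/

/-- Shannon entropy of the partition of the finite set `A` into blocks `P x` (the block
of `x ∈ A`), with respect to the uniform measure:
`H(Π) = -∑_{π ∈ Π} μ(π) log μ(π) = -(1/|A|) ∑_{x ∈ A} log (|P x|/|A|)`. -/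
noncomputable def partitionEntropy (A : Set G) (P : G → Set G) : ℝ :=
  -(1 / (Nat.card ↥A : ℝ)) * ∑ᶠ x ∈ A, Real.log ((Nat.card ↥(P x) : ℝ) / (Nat.card ↥A : ℝ))

/-- Normalised entropy `h(Π) = H(Π)/log |Π|`, where `|Π|` is the number of blocks. -/
noncomputable def normalizedEntropy (A : Set G) (P : G → Set G) : ℝ :=
  partitionEntropy A P / Real.log (Nat.card ↥(P '' A))

/-- The block of `x` in the partition `Π(n,r)` of `S(n)`: elements of `S(n)` joined
to `x` by a path inside the annulus `S(n,r)`. -/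
def piBlock (S : Set G) (n r : ℕ) (x : G) : Set G :=
  {y | y ∈ wSphere S n ∧ connectedIn S (wAnnulus S n r) x y}

/-- The block of `x` in the partition `Π(n,r)^∞` of `S(n)^∞`: elements of `S(n)^∞`
joined to `x` by a path inside `S(n,r)^∞`. -/
def piBlockInf (S : Set G) (n r : ℕ) (x : G) : Set G :=
  {y | y ∈ sphereInf S n 0 ∧ connectedIn S (sphereInf S n r) x y}

/-! ### Wreath products -/

/-- Finitely supported functions `Γ → L`, as a subgroup of the product group. -/
def LampGroup (Γ L : Type*) [Group Γ] [Group L] : Subgroup (Γ → L) where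
  carrier := {f | (Function.mulSupport f).Finite}
  one_mem' := by
    refine Set.Finite.subset Set.finite_empty fun x hx => ?_
    exact hx rfl
  mul_mem' := by
    intro a b ha hb
    exact (Set.Finite.union ha hb).subset (Function.mulSupport_mul a b)
  inv_mem' := by
    intro a ha
    refine ha.subset fun x hx => ?_
    simp only [Function.mem_mulSupport, Pi.inv_apply, ne_eq, inv_eq_one] at hx
    exact hx

variable (Γ L : Type*) [Group Γ] [Group L]

/-- Translation action of `Γ` on finitely supported lamp configurations. -/
noncomputable def shiftAut (γ : Γ) : ↥(LampGroup Γ L) ≃* ↥(LampGroup Γ L) where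
  toFun f := ⟨fun x => (f : Γ → L) (γ⁻¹ * x), by
    show (Function.mulSupport fun x => (f : Γ → L) (γ⁻¹ * x)).Finite
    exact Set.Finite.preimage ((mul_right_injective γ⁻¹).injOn) f.2⟩
  invFun f := ⟨fun x => (f : Γ → L) (γ * x), by
    show (Function.mulSupport fun x => (f : Γ → L) (γ * x)).Finite
    exact Set.Finite.preimage ((mul_right_injective γ).injOn) f.2⟩
  left_inv := by
    intro f
    apply Subtype.ext
    funext x
    simp
  right_inv := by
    intro f
    apply Subtype.ext
    funext x
    simp
  map_mul' := by
    intro f g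
    apply Subtype.ext
    rfl

/-- The action homomorphism `Γ →* Aut(⊕_Γ L)`. -/
noncomputable def shiftHom : Γ →* MulAut ↥(LampGroup Γ L) where
  toFun := shiftAut Γ L
  map_one' := by
    apply MulEquiv.ext
    intro f
    apply Subtype.ext
    funext x
    simp [shiftAut]
  map_mul' := by
    intro a b
    apply MulEquiv.ext
    intro f
    apply Subtype.ext
    funext x
    simp [shiftAut, mul_assoc]

/-- The (restricted) wreath product `Γ ≀ L = Γ ⋉ (⊕_Γ L)`. -/
abbrev Wreath := ↥(LampGroup Γ L) ⋊[shiftHom Γ L] Γ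

open Classical in
/-- The element `(e_Γ, δ_l)` of the wreath product: lamp `l` at the identity. -/
noncomputable def lampElt (l : L) : Wreath Γ L :=
  ⟨⟨fun x => if x = (1 : Γ) then l else 1, by
    refine Set.Finite.subset (Set.finite_singleton (1 : Γ)) fun x hx => ?_
    rcases eq_or_ne x 1 with h | h
    · simp [h]
    · exact absurd (if_neg h) hx⟩, 1⟩

/-- The element `(γ, Id)` of the wreath product. -/
def baseElt (γ : Γ) : Wreath Γ L := ⟨1, γ⟩

/-- The "switch-walk-switch" generating set `L S_Γ L`. -/
noncomputable def swsw (SΓ : Set Γ) : Set (Wreath Γ L) :=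
  {g | ∃ l l' : L, ∃ s ∈ SΓ, g = lampElt Γ L l * baseElt Γ L s * lampElt Γ L l'}

/-- The "switch or walk" generating set `S_Γ ∪ S_L`. -/
noncomputable def walkOrSwitch (SΓ : Set Γ) (SL : Set L) : Set (Wreath Γ L) :=
  (baseElt Γ L '' SΓ) ∪ (lampElt Γ L '' SL)

/-- `ℤ` written multiplicatively. -/
abbrev MZ := Multiplicative ℤ

/-- The generating set `{±1}` of `ℤ`. -/
def genZ : Set MZ := {Multiplicative.ofAdd 1, Multiplicative.ofAdd (-1)}

/-- The ladder `ℤ × ℤ/2ℤ` written multiplicatively. -/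
abbrev Ladder := Multiplicative (ℤ × ZMod 2)

/-- The generating set `{(±1,0), (0,1)}` of the ladder. -/
def genLadder : Set Ladder :=
  {Multiplicative.ofAdd (1, 0), Multiplicative.ofAdd (-1, 0), Multiplicative.ofAdd (0, 1)}

/-- The set of vertices of the minimal subtree of a tree containing a set `X`:
all vertices lying on a geodesic between two points of `X`. -/
def treeHull {V : Type*} (H : SimpleGraph V) (X : Set V) : Set V :=
  {v | ∃ x ∈ X, ∃ y ∈ X, H.dist x v + H.dist v y = H.dist x y}


/-!
Write `N(γ, f) = ∑ₓ |f x|_{S_L} + d_TS(e, supp f, γ)`. The word length is the graph distance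
from `1` in the Cayley graph, and a function on the vertices of a graph is the distance from `x`
as soon as it vanishes at `x`, grows by at most one along every edge, and can be decreased along
some edge at every other vertex. For `N` the first property holds because a walk
step extends an optimal tour by one edge, while a switch changes only the lamp at `γ`, which every
tour ending at `γ` visits, and changes it by one `S_L`-step. For the second: if the lamp at `γ` is
on, switch it one step closer to `1` in `Cay(L, S_L)`; if it is off, `γ` need not be visited, so
the lamplighter can retreat along the last edge of an optimal tour.
-/

namespace SimpleGraph

variable {V : Type*} {H : SimpleGraph V}

lemma Adj.dist_le_add_one {u v : V} (h : H.Adj u v) (x : V) : H.dist x v ≤ H.dist x u + 1 := by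
  have := h.diff_dist_adj (u := x)
  omega

lemma Connected.exists_adj_dist_lt (hconn : H.Connected) {x v : V} (hv : v ≠ x) :
    ∃ u, H.Adj v u ∧ H.dist x u < H.dist x v := by
  obtain ⟨p, hp⟩ := hconn.exists_walk_length_eq_dist v x
  cases p with
  | nil => exact absurd rfl hv
  | cons h q =>
    refine ⟨_, h, ?_⟩
    rw [dist_comm, dist_comm (u := x), ← hp]
    exact (dist_le q).trans_lt (by simp)

lemma le_add_length_of_adj_le_add_one {N : V → ℕ} (hN : ∀ u v, H.Adj u v → N v ≤ N u + 1)
    {x y : V} (p : H.Walk x y) : N y ≤ N x + p.length := by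
  induction p with
  | nil => simp
  | cons h _ ih =>
    have := hN _ _ h
    rw [Walk.length_cons]
    omega

lemma exists_walk_length_le_of_exists_adj_lt {N : V → ℕ} {x : V}
    (hN : ∀ v, v ≠ x → ∃ u, H.Adj v u ∧ N u < N v) (v : V) :
    ∃ p : H.Walk x v, p.length ≤ N v := by
  induction hn : N v using Nat.strong_induction_on generalizing v with
  | _ n ih =>
    by_cases hvx : v = x
    · subst hvx
      exact ⟨.nil, by simp⟩
    · obtain ⟨u, hadj, hlt⟩ := hN v hvx
      obtain ⟨p, hp⟩ := ih _ (hn ▸ hlt) u rfl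
      exact ⟨p.concat hadj.symm, by rw [Walk.length_concat]; omega⟩

theorem dist_eq_of_adj_le_add_one_of_exists_adj_lt {N : V → ℕ} {x : V} (hx : N x = 0)
    (hlip : ∀ u v, H.Adj u v → N v ≤ N u + 1)
    (hdesc : ∀ v, v ≠ x → ∃ u, H.Adj v u ∧ N u < N v) (v : V) :
    H.dist x v = N v := by
  obtain ⟨p, hp⟩ := exists_walk_length_le_of_exists_adj_lt hdesc v
  obtain ⟨q, hq⟩ := Reachable.exists_walk_length_eq_dist ⟨p⟩
  have := le_add_length_of_adj_le_add_one hlip q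
  have := dist_le p
  omega

variable {x y : V} {A : Set V}

lemma tsDist_le_length (p : H.Walk x y) (hp : ∀ a ∈ A, a ∈ p.support) :
    tsDist H x A y ≤ p.length :=
  Nat.sInf_le ⟨p, rfl, hp⟩

lemma Connected.exists_walk_forall_mem_support (hconn : H.Connected)
    (hA : A.Finite) (x y : V) : ∃ p : H.Walk x y, ∀ a ∈ A, a ∈ p.support := by
  induction A, hA using Set.Finite.induction_on generalizing x with
  | empty => exact ⟨(hconn x y).some, by simp⟩
  | @insert a A _ _ ih =>
    obtain ⟨q, hq⟩ := ih a
    refine ⟨(hconn x a).some.append q, fun b hb => ?_⟩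
    rw [Walk.mem_support_append_iff]
    rcases hb with rfl | hb
    · exact Or.inr q.start_mem_support
    · exact Or.inr (hq b hb)

lemma Connected.exists_walk_length_eq_tsDist (hconn : H.Connected)
    (hA : A.Finite) (x y : V) :
    ∃ p : H.Walk x y, p.length = tsDist H x A y ∧ ∀ a ∈ A, a ∈ p.support := by
  obtain ⟨p, hp⟩ := hconn.exists_walk_forall_mem_support hA x y
  exact Nat.sInf_mem (s := {n | ∃ q : H.Walk x y, q.length = n ∧ ∀ a ∈ A, a ∈ q.support})
    ⟨p.length, p, rfl, hp⟩

lemma Connected.tsDist_le_of_subset_insert (hconn : H.Connected) {B : Set V}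
    (hB : B.Finite) (hAB : A ⊆ insert y B) : tsDist H x A y ≤ tsDist H x B y := by
  obtain ⟨p, hp, hpB⟩ := hconn.exists_walk_length_eq_tsDist hB x y
  refine hp ▸ tsDist_le_length p fun a ha => ?_
  rcases hAB ha with rfl | ha
  · exact p.end_mem_support
  · exact hpB a ha

lemma Connected.tsDist_le_add_one_of_adj (hconn : H.Connected) (hA : A.Finite)
    {z : V} (h : H.Adj y z) : tsDist H x A z ≤ tsDist H x A y + 1 := by
  obtain ⟨p, hp, hpA⟩ := hconn.exists_walk_length_eq_tsDist hA x y
  refine (tsDist_le_length (p.concat h) fun a ha => ?_).trans (by rw [Walk.length_concat, hp])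
  rw [Walk.support_concat]
  exact List.mem_append_left _ (hpA a ha)

lemma Connected.eq_of_tsDist_eq_zero (hconn : H.Connected) (hA : A.Finite)
    (h : tsDist H x A y = 0) : y = x ∧ A ⊆ {x} := by
  obtain ⟨p, hp, hpA⟩ := hconn.exists_walk_length_eq_tsDist hA x y
  cases p with
  | nil => exact ⟨rfl, fun a ha => by simpa using hpA a ha⟩
  | cons => rw [Walk.length_cons] at hp; omega

lemma Connected.exists_adj_tsDist_lt (hconn : H.Connected) (hA : A.Finite)
    (hy : y ∉ A) (h : tsDist H x A y ≠ 0) : ∃ z, H.Adj y z ∧ tsDist H x A z < tsDist H x A y := by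
  obtain ⟨p, hp, hpA⟩ := hconn.exists_walk_length_eq_tsDist hA x y
  cases hr : p.reverse with
  | nil =>
    have := congrArg Walk.length hr
    rw [p.length_reverse, Walk.length_nil] at this
    omega
  | cons hadj q =>
    refine ⟨_, hadj, (tsDist_le_length q.reverse fun a ha => ?_).trans_lt ?_⟩
    · have := hpA a ha
      rw [← List.mem_reverse, ← Walk.support_reverse, hr, Walk.support_cons] at this
      rw [Walk.support_reverse, List.mem_reverse]
      exact (List.mem_cons.mp this).resolve_left (ne_of_mem_of_not_mem ha hy)
    · rw [← hp, ← p.length_reverse, hr, Walk.length_reverse, Walk.length_cons]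
      omega

end SimpleGraph

open SimpleGraph

section Cayley

variable {S : Set G}

lemma cayley_adj_iff {g h : G} : (cayley G S).Adj g h ↔ g ≠ h ∧ g⁻¹ * h ∈ S ∪ S⁻¹ := by
  simp [cayley, mul_inv_rev]

lemma cayley_adj_mul_iff {g s : G} : (cayley G S).Adj g (g * s) ↔ s ≠ 1 ∧ s ∈ S ∪ S⁻¹ := by
  simp [cayley_adj_iff]

lemma cayley_reachable_mul (g : G) {s : G} (hs : s ∈ S ∪ S⁻¹) :
    (cayley G S).Reachable g (g * s) := by
  rcases eq_or_ne s 1 with rfl | hne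
  · simp
  · exact (cayley_adj_mul_iff.mpr ⟨hne, hs⟩).reachable

lemma cayley_connected (hgen : Subgroup.closure S = ⊤) : (cayley G S).Connected := by
  have hreach (g : G) : (cayley G S).Reachable 1 g := by
    induction (hgen ▸ Subgroup.mem_top g : g ∈ Subgroup.closure S)
      using Subgroup.closure_induction_right with
    | one => rfl
    | mul_right x _ s hs ih => exact ih.trans (cayley_reachable_mul x (.inl hs))
    | mul_inv_cancel x _ s hs ih =>
      exact ih.trans (cayley_reachable_mul x (.inr (by simpa using hs)))
  exact ⟨fun g h => (hreach g).symm.trans (hreach h)⟩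

@[simp] lemma wlen_one : wlen S (1 : G) = 0 := dist_self

lemma wlen_mul_le (g : G) {s : G} (hs : s ∈ S ∪ S⁻¹) : wlen S (g * s) ≤ wlen S g + 1 := by
  rcases eq_or_ne s 1 with rfl | hne
  · simp
  · exact (cayley_adj_mul_iff.mpr ⟨hne, hs⟩).dist_le_add_one 1

lemma exists_wlen_mul_lt (hgen : Subgroup.closure S = ⊤) {g : G} (hg : g ≠ 1) :
    ∃ s ∈ S ∪ S⁻¹, wlen S (g * s) < wlen S g := by
  obtain ⟨h, hadj, hlt⟩ := (cayley_connected hgen).exists_adj_dist_lt hg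
  exact ⟨g⁻¹ * h, (cayley_adj_iff.mp hadj).2, by simpa [wlen] using hlt⟩

theorem wlen_eq_of_le_add_one_of_exists_lt {N : G → ℕ} (h1 : N 1 = 0)
    (hlip : ∀ g, ∀ s ∈ S ∪ S⁻¹, N (g * s) ≤ N g + 1)
    (hdesc : ∀ g ≠ 1, ∃ s ∈ S ∪ S⁻¹, N (g * s) < N g) (g : G) : wlen S g = N g := by
  refine dist_eq_of_adj_le_add_one_of_exists_adj_lt h1 (fun u v huv => ?_) (fun v hv => ?_) g
  · simpa using hlip u _ (cayley_adj_iff.mp huv).2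
  · obtain ⟨s, hs, hlt⟩ := hdesc v hv
    have hs1 : s ≠ 1 := by rintro rfl; simp at hlt
    exact ⟨v * s, cayley_adj_mul_iff.mpr ⟨hs1, hs⟩, hlt⟩

end Cayley

lemma finsum_update_add {α M : Type*} [AddCommMonoid M] [DecidableEq α] {φ : α → M}
    (hφ : (Function.support φ).Finite) (a : α) (b : M) :
    (∑ᶠ x, Function.update φ a b x) + φ a = (∑ᶠ x, φ x) + b := by
  set T := insert a hφ.toFinset
  have ha : a ∈ T := Finset.mem_insert_self _ _
  have hsub : Function.support φ ⊆ T := by simp [T, Set.subset_insert]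
  have hsub' : Function.support (Function.update φ a b) ⊆ T := by
    intro x hx
    rcases eq_or_ne x a with rfl | hne
    · exact ha
    · exact hsub (by simpa [hne] using hx)
  rw [finsum_eq_sum_of_support_subset _ hsub, finsum_eq_sum_of_support_subset _ hsub',
    Finset.sum_update_of_mem ha, ← Finset.add_sum_erase T φ ha, Finset.sdiff_singleton_eq_erase]
  abel

section Wreath

variable {Γ L}

lemma finite_mulSupport_left (g : Wreath Γ L) : (Function.mulSupport (g.left : Γ → L)).Finite :=
  g.left.2

@[simp] lemma shiftHom_apply_apply (γ x : Γ) (F : LampGroup Γ L) :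
    ((shiftHom Γ L γ F : LampGroup Γ L) : Γ → L) x = (F : Γ → L) (γ⁻¹ * x) :=
  rfl

lemma mul_baseElt (g : Wreath Γ L) (t : Γ) : g * baseElt Γ L t = ⟨g.left, g.right * t⟩ := by
  ext <;> simp [baseElt]

lemma baseElt_inv (t : Γ) : (baseElt Γ L t)⁻¹ = baseElt Γ L t⁻¹ := by
  ext <;> simp [baseElt]

lemma mul_lampElt_right (g : Wreath Γ L) (l : L) : (g * lampElt Γ L l).right = g.right := by
  simp [lampElt]

lemma mul_lampElt_left [DecidableEq Γ] (g : Wreath Γ L) (l : L) :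
    ((g * lampElt Γ L l).left : Γ → L)
      = Function.update (g.left : Γ → L) g.right ((g.left : Γ → L) g.right * l) := by
  funext x
  rcases eq_or_ne x g.right with rfl | hx
  · simp [lampElt]
  · simp [lampElt, hx, inv_mul_eq_one, Ne.symm hx]

lemma lampElt_inv (l : L) : (lampElt Γ L l)⁻¹ = lampElt Γ L l⁻¹ := by
  classical
  refine inv_eq_of_mul_eq_one_right (SemidirectProduct.ext ?_ (mul_lampElt_right _ _))
  refine Subtype.ext (funext fun x => ?_)
  rw [mul_lampElt_left]
  rcases eq_or_ne x 1 with rfl | hx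
  · simp [lampElt]
  · simp [lampElt, hx]

variable {SΓ : Set Γ} {SL : Set L}

lemma mem_walkOrSwitch_union_inv_iff {s : Wreath Γ L} :
    s ∈ walkOrSwitch Γ L SΓ SL ∪ (walkOrSwitch Γ L SΓ SL)⁻¹ ↔
      (∃ t ∈ SΓ ∪ SΓ⁻¹, s = baseElt Γ L t) ∨ ∃ l ∈ SL ∪ SL⁻¹, s = lampElt Γ L l := by
  simp only [walkOrSwitch, Set.mem_union, Set.mem_inv, Set.mem_image]
  constructor
  · rintro ((⟨t, ht, rfl⟩ | ⟨l, hl, rfl⟩) | (⟨t, ht, hs⟩ | ⟨l, hl, hs⟩))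
    · exact .inl ⟨t, .inl ht, rfl⟩
    · exact .inr ⟨l, .inl hl, rfl⟩
    · exact .inl ⟨t⁻¹, .inr (by simpa using ht), by rw [← baseElt_inv, hs, inv_inv]⟩
    · exact .inr ⟨l⁻¹, .inr (by simpa using hl), by rw [← lampElt_inv, hs, inv_inv]⟩
  · rintro (⟨t, ht | ht, rfl⟩ | ⟨l, hl | hl, rfl⟩)
    · exact .inl (.inl ⟨t, ht, rfl⟩)
    · exact .inr (.inl ⟨t⁻¹, ht, (baseElt_inv t).symm⟩)
    · exact .inl (.inr ⟨l, hl, rfl⟩)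
    · exact .inr (.inr ⟨l⁻¹, hl, (lampElt_inv l).symm⟩)

noncomputable def tsNorm (SΓ : Set Γ) (SL : Set L) (g : Wreath Γ L) : ℕ :=
  (∑ᶠ x, wlen SL ((g.left : Γ → L) x))
    + tsDist (cayley Γ SΓ) 1 (Function.mulSupport (g.left : Γ → L)) g.right

lemma tsNorm_one : tsNorm SΓ SL 1 = 0 := by
  have hleft : ((1 : Wreath Γ L).left : Γ → L) = 1 := rfl
  simp only [tsNorm, hleft, Pi.one_apply, wlen_one, finsum_zero, Function.mulSupport_one,
    SemidirectProduct.one_right, zero_add]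
  exact Nat.le_zero.mp (tsDist_le_length .nil (by simp))

lemma tsNorm_mul_baseElt_le (hconn : (cayley Γ SΓ).Connected) (g : Wreath Γ L) {t : Γ}
    (ht : t ∈ SΓ ∪ SΓ⁻¹) : tsNorm SΓ SL (g * baseElt Γ L t) ≤ tsNorm SΓ SL g + 1 := by
  rw [mul_baseElt]
  rcases eq_or_ne t 1 with rfl | hne
  · simp [tsNorm]
  · have := hconn.tsDist_le_add_one_of_adj (x := 1) (finite_mulSupport_left g)
      (cayley_adj_mul_iff.mpr ⟨hne, ht⟩ : (cayley Γ SΓ).Adj g.right (g.right * t))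
    simp only [tsNorm]
    omega

lemma finsum_wlen_mul_lampElt_add (g : Wreath Γ L) (l : L) :
    (∑ᶠ x, wlen SL (((g * lampElt Γ L l).left : Γ → L) x)) + wlen SL ((g.left : Γ → L) g.right)
      = (∑ᶠ x, wlen SL ((g.left : Γ → L) x)) + wlen SL ((g.left : Γ → L) g.right * l) := by
  classical
  have hfin : (Function.support fun x => wlen SL ((g.left : Γ → L) x)).Finite :=
    (finite_mulSupport_left g).subset fun x hx hx1 => hx (by simp [hx1])
  rw [mul_lampElt_left, ← Function.comp_def (wlen SL), Function.comp_update]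
  exact finsum_update_add hfin _ _

lemma tsDist_mul_lampElt_le (hconn : (cayley Γ SΓ).Connected) (g : Wreath Γ L) (l : L) :
    tsDist (cayley Γ SΓ) 1 (Function.mulSupport ((g * lampElt Γ L l).left : Γ → L))
        (g * lampElt Γ L l).right
      ≤ tsDist (cayley Γ SΓ) 1 (Function.mulSupport (g.left : Γ → L)) g.right := by
  classical
  rw [mul_lampElt_right]
  refine hconn.tsDist_le_of_subset_insert (finite_mulSupport_left g) fun x hx => ?_
  rw [mul_lampElt_left] at hx
  rcases eq_or_ne x g.right with rfl | hne
  · exact Set.mem_insert _ _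
  · exact Set.mem_insert_of_mem _ (by simpa [hne] using hx)

lemma tsNorm_mul_le (hconn : (cayley Γ SΓ).Connected) (g : Wreath Γ L) {s : Wreath Γ L}
    (hs : s ∈ walkOrSwitch Γ L SΓ SL ∪ (walkOrSwitch Γ L SΓ SL)⁻¹) :
    tsNorm SΓ SL (g * s) ≤ tsNorm SΓ SL g + 1 := by
  obtain ⟨t, ht, rfl⟩ | ⟨l, hl, rfl⟩ := mem_walkOrSwitch_union_inv_iff.mp hs
  · exact tsNorm_mul_baseElt_le hconn g ht
  · have hsum := finsum_wlen_mul_lampElt_add (SL := SL) g l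
    have hlamp := wlen_mul_le (S := SL) ((g.left : Γ → L) g.right) hl
    have htour := tsDist_mul_lampElt_le hconn g l
    simp only [tsNorm]
    omega

lemma exists_tsNorm_mul_lt (hconn : (cayley Γ SΓ).Connected) (hgenL : Subgroup.closure SL = ⊤)
    {g : Wreath Γ L} (hg : g ≠ 1) :
    ∃ s ∈ walkOrSwitch Γ L SΓ SL ∪ (walkOrSwitch Γ L SΓ SL)⁻¹,
      tsNorm SΓ SL (g * s) < tsNorm SΓ SL g := by
  by_cases hoff : (g.left : Γ → L) g.right = 1
  · have htour : tsDist (cayley Γ SΓ) 1 (Function.mulSupport (g.left : Γ → L)) g.right ≠ 0 := by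
      intro h0
      obtain ⟨hright, hsupp⟩ := hconn.eq_of_tsDist_eq_zero (finite_mulSupport_left g) h0
      refine hg (SemidirectProduct.ext (Subtype.ext (funext fun x => ?_)) hright)
      by_contra hx
      rw [Set.mem_singleton_iff.mp (hsupp hx), ← hright] at hx
      exact hx hoff
    obtain ⟨z, hadj, hlt⟩ := hconn.exists_adj_tsDist_lt (finite_mulSupport_left g)
      (Function.notMem_mulSupport.mpr hoff) htour
    refine ⟨baseElt Γ L (g.right⁻¹ * z),
      mem_walkOrSwitch_union_inv_iff.mpr (.inl ⟨_, (cayley_adj_iff.mp hadj).2, rfl⟩), ?_⟩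
    rw [mul_baseElt, mul_inv_cancel_left]
    simp only [tsNorm]
    omega
  · obtain ⟨l, hl, hlt⟩ := exists_wlen_mul_lt hgenL hoff
    refine ⟨lampElt Γ L l, mem_walkOrSwitch_union_inv_iff.mpr (.inr ⟨l, hl, rfl⟩), ?_⟩
    have hsum := finsum_wlen_mul_lampElt_add (SL := SL) g l
    have htour := tsDist_mul_lampElt_le hconn g l
    simp only [tsNorm]
    omega

theorem wlen_walkOrSwitch (hgenΓ : Subgroup.closure SΓ = ⊤) (hgenL : Subgroup.closure SL = ⊤)
    (g : Wreath Γ L) : wlen (walkOrSwitch Γ L SΓ SL) g = tsNorm SΓ SL g :=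
  have hconn := cayley_connected hgenΓ
  wlen_eq_of_le_add_one_of_exists_lt tsNorm_one (fun g _ hs => tsNorm_mul_le hconn g hs)
    (fun _ hg => exists_tsNorm_mul_lt hconn hgenL hg) g

end Wreath

theorem stmt_14_general {Γ L : Type*} [Group Γ] [Group L]
    (SΓ : Set Γ) (SL : Set L)
    (hgenΓ : Subgroup.closure SΓ = ⊤) (hgenL : Subgroup.closure SL = ⊤)
    (γ : Γ) (f : Γ → L) (hf : f ∈ LampGroup Γ L) :
    wlen (walkOrSwitch Γ L SΓ SL) (⟨⟨f, hf⟩, γ⟩ : Wreath Γ L)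
      = (∑ᶠ x : Γ, wlen SL (f x)) + tsDist (cayley Γ SΓ) 1 (Function.mulSupport f) γ :=
  wlen_walkOrSwitch hgenΓ hgenL _

/-- In `Γ ≀ L` with the "switch or walk" generating set `S_Γ ∪ S_L`, the word
norm of `g = (γ, f)` is `∑_x |f x|_{S_L}` plus the travelling salesman distance in `Cay(Γ,S_Γ)`
from `e_Γ` to `γ` through the support of `f`. -/
theorem stmt_14 {Γ L : Type*} [Group Γ] [Group L]
    (SΓ : Set Γ) (SL : Set L) (hfinΓ : SΓ.Finite) (hfinL : SL.Finite)
    (hgenΓ : Subgroup.closure SΓ = ⊤) (hgenL : Subgroup.closure SL = ⊤)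
    (γ : Γ) (f : Γ → L) (hf : f ∈ LampGroup Γ L) :
    wlen (walkOrSwitch Γ L SΓ SL) (⟨⟨f, hf⟩, γ⟩ : Wreath Γ L)
      = (∑ᶠ x : Γ, wlen SL (f x)) + tsDist (cayley Γ SΓ) 1 (Function.mulSupport f) γ :=
  stmt_14_general SΓ SL hgenΓ hgenL γ f hf
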